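/- T_M = F·(x₁D₁) ⊕ F·(x₂D₂) is an abelian subalgebra of the Melikian algebra M acting semisimply on M via the adjoint action; in particular [x₁D₁, x₂D₂] = 0 and each of ad(x₁D₁), ad(x₂D₂) is diagonalizable on M. -/

import Mathlib

open scoped BigOperators

namespace Melikian

/-- Index set for monomials in the truncated polynomial algebra
`A(2) = F[x₁,x₂]/(x₁⁵,x₂⁵)`. -/
abbrev Idx : Type := Fin 5 × Fin 5

/-- The truncated polynomial algebra `A(2)`, as functions on monomial exponents. -/
abbrev A (F : Type*) [Field F] : Type _ := Idx → F

variable {F : Type*} [Field F]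

/-- The monomial `x^b = x₁^{b₁} x₂^{b₂}`. -/
def X (b : Idx) : A F := fun a => if a = b then 1 else 0

/-- Truncated multiplication of `A(2)`. -/
def mulA (f g : A F) : A F := fun a =>
  ∑ b : Idx, ∑ c : Idx,
    if b.1.val + c.1.val = a.1.val ∧ b.2.val + c.2.val = a.2.val then f b * g c else 0

/-- Partial derivative `∂/∂x₁` on `A(2)`. -/
def d1 (f : A F) : A F := fun a =>
  if h : a.1.val + 1 < 5 then ((a.1.val + 1 : ℕ) : F) * f (⟨a.1.val + 1, h⟩, a.2) else 0

/-- Partial derivative `∂/∂x₂` on `A(2)`. -/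
def d2 (f : A F) : A F := fun a =>
  if h : a.2.val + 1 < 5 then ((a.2.val + 1 : ℕ) : F) * f (a.1, ⟨a.2.val + 1, h⟩) else 0

/-- The Witt–Jacobson algebra `W(2)` as a free `A(2)`-module with basis `D₁, D₂`:
an element `(f₁, f₂)` stands for `f₁D₁ + f₂D₂`. -/
abbrev W (F : Type*) [Field F] : Type _ := A F × A F

/-- Action of a derivation `D = f₁D₁+f₂D₂ ∈ W(2)` on `A(2)`. -/
def Dw (D : W F) (g : A F) : A F := mulA D.1 (d1 g) + mulA D.2 (d2 g)

/-- Divergence `div(f₁D₁+f₂D₂) = D₁(f₁) + D₂(f₂)`. -/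
def divW (D : W F) : A F := d1 D.1 + d2 D.2

/-- The usual bracket of `W(2)`. -/
def brW (D E : W F) : W F := (Dw D E.1 - Dw E D.1, Dw D E.2 - Dw E D.2)

/-- Multiplication of an element of `W(2)` by a truncated polynomial. -/
def smulA (f : A F) (D : W F) : W F := (mulA f D.1, mulA f D.2)

/-- The Melikian algebra `M = A(2) ⊕ W(2) ⊕ W(2)~` as an `F`-vector space. -/
abbrev Mel (F : Type*) [Field F] : Type _ := A F × W F × W F

/-- Inclusion of `A(2)` into `M`. -/
def ιA (f : A F) : Mel F := (f, 0, 0)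

/-- Inclusion of `W(2)` into `M`. -/
def ιW (D : W F) : Mel F := (0, D, 0)

/-- Inclusion of the second copy `W(2)~` into `M`, `D ↦ D̃`. -/
def ιT (D : W F) : Mel F := (0, 0, D)

/-- The Melikian bracket on `M = A(2) ⊕ W(2) ⊕ W(2)~`, defined by the rules
`[D,Ẽ] = [D,E]~ + 2 div(D) Ẽ`, `[D,f] = D(f) − 2 div(D) f`,
`[f₁D̃₁+f₂D̃₂, g₁D̃₁+g₂D̃₂] = f₁g₂ − f₂g₁`, `[f,Ẽ] = fE`,
`[f,g] = 2(gD₂(f) − fD₂(g))D̃₁ + 2(fD₁(g) − gD₁(f))D̃₂`,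
extended bilinearly and antisymmetrically (with the standard bracket on `W(2)`). -/
def brM (u v : Mel F) : Mel F :=
  ( (Dw u.2.1 v.1 - (2 : F) • mulA (divW u.2.1) v.1)
      - (Dw v.2.1 u.1 - (2 : F) • mulA (divW v.2.1) u.1)
      + (mulA u.2.2.1 v.2.2.2 - mulA u.2.2.2 v.2.2.1)
  , brW u.2.1 v.2.1 + smulA u.1 v.2.2 - smulA v.1 u.2.2
  , (brW u.2.1 v.2.2 + (2 : F) • smulA (divW u.2.1) v.2.2)
      - (brW v.2.1 u.2.2 + (2 : F) • smulA (divW v.2.1) u.2.2)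
      + ((2 : F) • (mulA v.1 (d2 u.1) - mulA u.1 (d2 v.1)),
         (2 : F) • (mulA u.1 (d1 v.1) - mulA v.1 (d1 u.1))) )

/-- `x^b D_i` as an element of `W(2)` (`i = 0` stands for `D₁`, `i = 1` for `D₂`). -/
def wOf (i : Fin 2) (b : Idx) : W F := if i = 0 then (X b, 0) else (0, X b)

/-- The element `x₁D₁ ∈ M`. -/
def x1D1 : Mel F := ιW (X (1, 0), 0)

/-- The element `x₂D₂ ∈ M`. -/
def x2D2 : Mel F := ιW (0, X (0, 1))

/-- The element `1 ∈ A(2) ⊂ M`. -/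
def oneM : Mel F := ιA (X (0, 0))

/-- The element `D_{i+1} ∈ W(2) ⊂ M`. -/
def DD (i : Fin 2) : Mel F := ιW (wOf i (0, 0))

/-- The element `D̃_{i+1} ∈ W(2)~ ⊂ M`. -/
def TT (i : Fin 2) : Mel F := ιT (wOf i (0, 0))

/-- Total degree of a monomial exponent. -/
def degA (b : Idx) : ℤ := (b.1.val : ℤ) + (b.2.val : ℤ)

/-- The degree-`d` piece `M_d` of the `ℤ`-grading of the Melikian algebra:
`deg_M(f) = 3 deg(f) − 2` on `A(2)`, `deg_M(x^bD_i) = 3(|b|−1)` on `W(2)`, and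
`deg_M(x^bD̃_i) = 3(|b|−1)+2` on `W(2)~`. -/
def Md (d : ℤ) : Submodule F (Mel F) :=
  Submodule.span F
    ( {m | ∃ b : Idx, m = ιA (X b) ∧ d = 3 * degA b - 2}
      ∪ {m | ∃ b : Idx, ∃ i : Fin 2, m = ιW (wOf i b) ∧ d = 3 * (degA b - 1)}
      ∪ {m | ∃ b : Idx, ∃ i : Fin 2, m = ιT (wOf i b) ∧ d = 3 * (degA b - 1) + 2} )

/-- The part `M_{≥ d}` of the Melikian algebra. -/
def Mge (d : ℤ) : Submodule F (Mel F) := ⨆ e : ℤ, ⨆ _ : d ≤ e, (Md e : Submodule F (Mel F))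

/-- The squaring `Sq(γ)(x,y) = Σ_{k=1}^{4} [γ^k(x), γ^{5−k}(y)] / (k!(5−k)!)`
of an operator `γ` on the Melikian algebra (characteristic 5). -/
def melSq (γ : Mel F → Mel F) (x y : Mel F) : Mel F :=
  ∑ k ∈ Finset.Icc 1 4,
    ((Nat.factorial k * Nat.factorial (5 - k) : ℕ) : F)⁻¹ • brM (γ^[k] x) (γ^[5 - k] y)

/-- The Chevalley–Eilenberg coboundary of a linear 1-cochain of `M` with values in the
adjoint representation. -/
def cob (g : Mel F →ₗ[F] Mel F) (x y : Mel F) : Mel F :=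
  brM x (g y) - brM y (g x) - g (brM x y)


-- auxiliary lemmas
@[simp] lemma d1_zero : d1 (0 : A F) = 0 := by funext a; simp [d1]
@[simp] lemma d2_zero : d2 (0 : A F) = 0 := by funext a; simp [d2]
@[simp] lemma mulA_zero_right (f : A F) : mulA f 0 = 0 := by
  funext a; simp [mulA]
@[simp] lemma mulA_zero_left (g : A F) : mulA 0 g = 0 := by
  funext a; simp [mulA]
@[simp] lemma Dw_zero_right (D : W F) : Dw D 0 = 0 := by simp [Dw]
@[simp] lemma Dw_zero_left (g : A F) : Dw (0 : W F) g = 0 := by simp [Dw]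
@[simp] lemma divW_zero : divW (0 : W F) = 0 := by simp [divW]

lemma mulA_X_apply (b a : Idx) (g : A F) :
    mulA (X b) g a =
      ∑ c : Idx, if b.1.val + c.1.val = a.1.val ∧ b.2.val + c.2.val = a.2.val then g c else 0 := by
  unfold mulA
  rw [Finset.sum_eq_single b]
  · apply Finset.sum_congr rfl; intro c _; simp [X]
  · intro b' _ hb'; apply Finset.sum_eq_zero; intro c _; simp [X, hb']
  · simp

lemma mulA_X00 (g : A F) : mulA (X (0,0)) g = g := by
  funext a
  rw [mulA_X_apply, Finset.sum_eq_single a]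
  · simp
  · intro c _ hc
    rw [if_neg]
    rintro ⟨h1, h2⟩
    exact hc (Prod.ext (Fin.ext (by simpa using h1)) (Fin.ext (by simpa using h2)))
  · simp

lemma mulA_comm (f g : A F) : mulA f g = mulA g f := by
  funext a
  unfold mulA
  rw [Finset.sum_comm]
  apply Finset.sum_congr rfl; intro b _
  apply Finset.sum_congr rfl; intro c _
  rw [mul_comm]
  apply if_congr _ rfl rfl
  constructor <;> rintro ⟨h1, h2⟩ <;> omega

lemma mulA_X00' (f : A F) : mulA f (X (0,0)) = f := by rw [mulA_comm, mulA_X00]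

lemma Dw_x1_apply (g : A F) (a : Idx) : Dw ((X (1,0) : A F), 0) g a = (a.1.val : F) * g a := by
  show mulA (X (1,0)) (d1 g) a + mulA 0 (d2 g) a = _
  rw [mulA_zero_left]
  rw [Pi.zero_apply, add_zero, mulA_X_apply]
  obtain ⟨⟨a1, ha1⟩, a2⟩ := a
  cases a1 with
  | zero =>
    rw [Finset.sum_eq_zero]
    · simp
    · intro c _; rw [if_neg]; rintro ⟨h1, _⟩; simp at h1
  | succ k =>
    rw [Finset.sum_eq_single ((⟨k, by omega⟩ : Fin 5), a2)]
    · rw [if_pos (by simp; omega)]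
      simp only [d1]
      rw [dif_pos (by simpa using ha1)]
      try rfl
    · intro c _ hc
      rw [if_neg]
      rintro ⟨h1, h2⟩
      apply hc
      refine Prod.ext (Fin.ext ?_) (Fin.ext ?_) <;> simp_all <;> try omega
    · simp

lemma Dw_x2_apply (g : A F) (a : Idx) : Dw ((0 : A F), X (0,1)) g a = (a.2.val : F) * g a := by
  show mulA 0 (d1 g) a + mulA (X (0,1)) (d2 g) a = _
  rw [mulA_zero_left]
  rw [Pi.zero_apply, zero_add, mulA_X_apply]
  obtain ⟨a1, ⟨a2, ha2⟩⟩ := a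
  cases a2 with
  | zero =>
    rw [Finset.sum_eq_zero]
    · simp
    · intro c _; rw [if_neg]; rintro ⟨_, h2⟩; simp at h2
  | succ k =>
    rw [Finset.sum_eq_single (a1, (⟨k, by omega⟩ : Fin 5))]
    · rw [if_pos (by simp; omega)]
      simp only [d2]
      rw [dif_pos (by simpa using ha2)]
      try rfl
    · intro c _ hc
      rw [if_neg]
      rintro ⟨h1, h2⟩
      apply hc
      refine Prod.ext (Fin.ext ?_) (Fin.ext ?_) <;> simp_all <;> try omega
    · simp

lemma d1_X10 : d1 (X (1,0) : A F) = X (0,0) := by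
  funext a
  obtain ⟨⟨a1, ha1⟩, ⟨a2, ha2⟩⟩ := a
  simp only [d1, X, Prod.mk.injEq, Fin.ext_iff]
  split_ifs with h h1 h2 <;> simp_all

lemma d2_X10 : d2 (X (1,0) : A F) = 0 := by
  funext a
  simp only [d2, X, Prod.mk.injEq, Fin.ext_iff, Pi.zero_apply]
  split_ifs with h h1 <;> simp_all

lemma d1_X01 : d1 (X (0,1) : A F) = 0 := by
  funext a
  simp only [d1, X, Prod.mk.injEq, Fin.ext_iff, Pi.zero_apply]
  split_ifs with h h1 <;> simp_all

lemma d2_X01 : d2 (X (0,1) : A F) = X (0,0) := by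
  funext a
  obtain ⟨⟨a1, ha1⟩, ⟨a2, ha2⟩⟩ := a
  simp only [d2, X, Prod.mk.injEq, Fin.ext_iff]
  split_ifs with h h1 h2 <;> simp_all

lemma divW_x1 : divW ((X (1,0) : A F), 0) = X (0,0) := by
  simp [divW, d1_X10]
lemma divW_x2 : divW ((0 : A F), X (0,1)) = X (0,0) := by
  simp [divW, d2_X01]

lemma Dw_x1_X (b : Idx) : Dw ((X (1,0) : A F), 0) (X b) = (b.1.val : F) • X b := by
  funext a
  rw [Dw_x1_apply]
  by_cases h : a = b
  · subst h; simp
  · simp [X, h]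

lemma Dw_x2_X (b : Idx) : Dw ((0 : A F), X (0,1)) (X b) = (b.2.val : F) • X b := by
  funext a
  rw [Dw_x2_apply]
  by_cases h : a = b
  · subst h; simp
  · simp [X, h]


lemma Dw_X0_x1 (b : Idx) : Dw ((X b : A F), 0) (X (1,0)) = X b := by
  show mulA (X b) (d1 (X (1,0))) + mulA 0 (d2 (X (1,0))) = _
  rw [d1_X10, mulA_X00', mulA_zero_left, add_zero]
lemma Dw_X1_x1 (b : Idx) : Dw ((0 : A F), X b) (X (1,0)) = 0 := by
  show mulA 0 (d1 (X (1,0))) + mulA (X b) (d2 (X (1,0))) = _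
  rw [d2_X10, mulA_zero_right, mulA_zero_left, add_zero]
lemma Dw_X0_x2 (b : Idx) : Dw ((X b : A F), 0) (X (0,1)) = 0 := by
  show mulA (X b) (d1 (X (0,1))) + mulA 0 (d2 (X (0,1))) = _
  rw [d1_X01, mulA_zero_right, mulA_zero_left, add_zero]
lemma Dw_X1_x2 (b : Idx) : Dw ((0 : A F), X b) (X (0,1)) = X b := by
  show mulA 0 (d1 (X (0,1))) + mulA (X b) (d2 (X (0,1))) = _
  rw [d2_X01, mulA_X00', mulA_zero_left, zero_add]

lemma eig_x1_A (b : Idx) :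
    brM (x1D1 : Mel F) (ιA (X b)) = ((b.1.val : F) - 2) • ιA (X b) := by
  simp only [brM, x1D1, ιA, ιW, brW, smulA, Dw_x1_X, divW_x1, mulA_X00,
    mulA_zero_left, mulA_zero_right, Dw_zero_right, divW_zero, d1_zero, d2_zero,
    Prod.smul_mk, Prod.mk.injEq, smul_zero, sub_zero, zero_sub, add_zero, zero_add,
    sub_self, neg_zero, Prod.fst, Prod.snd, sub_smul]
  simp [Dw, Prod.ext_iff, sub_eq_iff_eq_add]

lemma eig_x1_W0 (b : Idx) :
    brM (x1D1 : Mel F) (ιW (X b, 0)) = ((b.1.val : F) - 1) • ιW (X b, 0) := by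
  simp only [brM, x1D1, ιW, brW, smulA, Dw_x1_X, Dw_X0_x1, divW_x1, mulA_X00, mulA_X00']
  simp [Dw, Prod.ext_iff, sub_smul]

lemma eig_x1_W1 (b : Idx) :
    brM (x1D1 : Mel F) (ιW (0, X b)) = (b.1.val : F) • ιW ((0 : A F), X b) := by
  simp only [brM, x1D1, ιW, brW, smulA, Dw_x1_X, Dw_X1_x1, divW_x1, mulA_X00, mulA_X00']
  simp [Dw, Prod.ext_iff, sub_smul]

lemma eig_x1_T0 (b : Idx) :
    brM (x1D1 : Mel F) (ιT (X b, 0)) = ((b.1.val : F) + 1) • ιT (X b, 0) := by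
  simp only [brM, x1D1, ιW, ιT, brW, smulA, Dw_x1_X, Dw_X0_x1, divW_x1, mulA_X00, mulA_X00']
  simp [Dw, Prod.ext_iff, sub_smul, add_smul]
  try module

lemma eig_x1_T1 (b : Idx) :
    brM (x1D1 : Mel F) (ιT (0, X b)) = ((b.1.val : F) + 2) • ιT ((0 : A F), X b) := by
  simp only [brM, x1D1, ιW, ιT, brW, smulA, Dw_x1_X, Dw_X1_x1, divW_x1, mulA_X00, mulA_X00']
  simp [Dw, Prod.ext_iff, sub_smul, add_smul]
  try module

lemma eig_x2_A (b : Idx) :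
    brM (x2D2 : Mel F) (ιA (X b)) = ((b.2.val : F) - 2) • ιA (X b) := by
  simp only [brM, x2D2, ιA, ιW, brW, smulA, Dw_x2_X, divW_x2, mulA_X00, mulA_X00']
  simp [Dw, Prod.ext_iff, sub_eq_iff_eq_add]
  try module

lemma eig_x2_W0 (b : Idx) :
    brM (x2D2 : Mel F) (ιW (X b, 0)) = (b.2.val : F) • ιW ((X b : A F), 0) := by
  simp only [brM, x2D2, ιW, brW, smulA, Dw_x2_X, Dw_X0_x2, divW_x2, mulA_X00, mulA_X00']
  simp [Dw, Prod.ext_iff, sub_smul]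

lemma eig_x2_W1 (b : Idx) :
    brM (x2D2 : Mel F) (ιW (0, X b)) = ((b.2.val : F) - 1) • ιW ((0 : A F), X b) := by
  simp only [brM, x2D2, ιW, brW, smulA, Dw_x2_X, Dw_X1_x2, divW_x2, mulA_X00, mulA_X00']
  simp [Dw, Prod.ext_iff, sub_smul]

lemma eig_x2_T0 (b : Idx) :
    brM (x2D2 : Mel F) (ιT (X b, 0)) = ((b.2.val : F) + 2) • ιT ((X b : A F), 0) := by
  simp only [brM, x2D2, ιW, ιT, brW, smulA, Dw_x2_X, Dw_X0_x2, divW_x2, mulA_X00, mulA_X00']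
  simp [Dw, Prod.ext_iff, sub_smul, add_smul]
  try module

lemma eig_x2_T1 (b : Idx) :
    brM (x2D2 : Mel F) (ιT (0, X b)) = ((b.2.val : F) + 1) • ιT ((0 : A F), X b) := by
  simp only [brM, x2D2, ιW, ιT, brW, smulA, Dw_x2_X, Dw_X1_x2, divW_x2, mulA_X00, mulA_X00']
  simp [Dw, Prod.ext_iff, sub_smul, add_smul]
  try module

lemma br_torus : brM (x1D1 : Mel F) x2D2 = 0 := by
  simp only [brM, x1D1, x2D2, ιW, brW, smulA, Dw_X1_x1, Dw_X0_x2]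
  simp [Dw, Prod.ext_iff]

lemma X_eq_single (b : Idx) : (X b : A F) = Pi.single b 1 := by
  funext a; simp [X, Pi.single_apply]

/-- Index for the monomial basis of `Mel F`. -/
abbrev MIdx : Type := Idx ⊕ (Idx ⊕ Idx) ⊕ (Idx ⊕ Idx)

noncomputable def bM : Module.Basis MIdx F (Mel F) :=
  (Pi.basisFun F Idx).prod
    (((Pi.basisFun F Idx).prod (Pi.basisFun F Idx)).prod
      ((Pi.basisFun F Idx).prod (Pi.basisFun F Idx)))

lemma bM_inl (b : Idx) : (bM : Module.Basis MIdx F (Mel F)) (Sum.inl b) = ιA (X b) := by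
  simp [bM, Module.Basis.prod_apply, ιA, X_eq_single, Prod.ext_iff]

lemma bM_inr_inl_inl (b : Idx) :
    (bM : Module.Basis MIdx F (Mel F)) (Sum.inr (Sum.inl (Sum.inl b))) = ιW (X b, 0) := by
  simp [bM, Module.Basis.prod_apply, ιW, X_eq_single, Prod.ext_iff]

lemma bM_inr_inl_inr (b : Idx) :
    (bM : Module.Basis MIdx F (Mel F)) (Sum.inr (Sum.inl (Sum.inr b))) = ιW (0, X b) := by
  simp [bM, Module.Basis.prod_apply, ιW, X_eq_single, Prod.ext_iff]

lemma bM_inr_inr_inl (b : Idx) :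
    (bM : Module.Basis MIdx F (Mel F)) (Sum.inr (Sum.inr (Sum.inl b))) = ιT (X b, 0) := by
  simp [bM, Module.Basis.prod_apply, ιT, X_eq_single, Prod.ext_iff]

lemma bM_inr_inr_inr (b : Idx) :
    (bM : Module.Basis MIdx F (Mel F)) (Sum.inr (Sum.inr (Sum.inr b))) = ιT (0, X b) := by
  simp [bM, Module.Basis.prod_apply, ιT, X_eq_single, Prod.ext_iff]

lemma eig1_all (j : MIdx) : ∃ c : F, brM x1D1 (bM j) = c • (bM : Module.Basis MIdx F (Mel F)) j := by
  rcases j with b | (b | b) | (b | b)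
  · exact ⟨_, by rw [bM_inl]; exact eig_x1_A b⟩
  · exact ⟨_, by rw [bM_inr_inl_inl]; exact eig_x1_W0 b⟩
  · exact ⟨_, by rw [bM_inr_inl_inr]; exact eig_x1_W1 b⟩
  · exact ⟨_, by rw [bM_inr_inr_inl]; exact eig_x1_T0 b⟩
  · exact ⟨_, by rw [bM_inr_inr_inr]; exact eig_x1_T1 b⟩

lemma eig2_all (j : MIdx) : ∃ c : F, brM x2D2 (bM j) = c • (bM : Module.Basis MIdx F (Mel F)) j := by
  rcases j with b | (b | b) | (b | b)
  · exact ⟨_, by rw [bM_inl]; exact eig_x2_A b⟩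
  · exact ⟨_, by rw [bM_inr_inl_inl]; exact eig_x2_W0 b⟩
  · exact ⟨_, by rw [bM_inr_inl_inr]; exact eig_x2_W1 b⟩
  · exact ⟨_, by rw [bM_inr_inr_inl]; exact eig_x2_T0 b⟩
  · exact ⟨_, by rw [bM_inr_inr_inr]; exact eig_x2_T1 b⟩

lemma card_MIdx : Fintype.card MIdx = 125 := by simp



/-- `T_M = F·(x₁D₁) ⊕ F·(x₂D₂)` is an abelian subalgebra of the Melikian algebra `M`
acting semisimply on `M` via the adjoint action: `[x₁D₁, x₂D₂] = 0` and each of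
`ad(x₁D₁)`, `ad(x₂D₂)` is diagonalizable on `M`. -/
theorem melikian_torus (F : Type*) [Field F] [CharP F 5] :
    brM (x1D1 : Mel F) x2D2 = 0 ∧
    (∃ b : Module.Basis (Fin 125) F (Mel F), ∀ k, ∃ c : F, brM x1D1 (b k) = c • b k) ∧
    (∃ b : Module.Basis (Fin 125) F (Mel F), ∀ k, ∃ c : F, brM x2D2 (b k) = c • b k) := by
  refine ⟨br_torus, ?_, ?_⟩ <;>
    refine ⟨bM.reindex (Fintype.equivFinOfCardEq card_MIdx), fun k => ?_⟩ <;>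
      rw [Module.Basis.reindex_apply]
  · exact eig1_all _
  · exact eig2_all _

end Melikian
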